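/- Let 1 < α < 2, h > 0, t ∈ ℝ, and let f : ℝ → ℝ be a bounded measurable function. Let Y₁⁺, Y₂⁺, … be independent, identically distributed random variables taking values in {2,3,4,…} with P(Y_n⁺ = k) = (1/(α-1)) · (-1)^k binom(α,k) for k ≥ 2 (these are positive and sum to 1). Then, with probability one, (1/h^α)·[f(t) - α f(t-h) + (α-1)·(1/N) Σ_{n=1}^{N} f(t - Y_n⁺ h)] converges, as N → ∞, to A_h^α f(t) := (1/h^α) Σ_{k=0}^∞ (-1)^k binom(α,k) f(t-kh). -/

import Mathlib

/-! Split off the two deterministic terms `k = 0, 1` of the Grünwald–Letnikov series. For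
`1 < α < 2` the remaining weights `w_k`, `k ≥ 2`, are nonnegative, so `w_k / (α - 1)` is the law
of `Y⁺` and the tail of the series is `(α - 1) 𝔼[f(t - Y⁺h)]`. Since `f` is bounded, the strong
law of large numbers applies to the i.i.d. sequence `f(t - Yₙ⁺h)`. -/

open Real Filter MeasureTheory ProbabilityTheory

/-- Generalized binomial coefficient `binom(a, k) = a(a-1)⋯(a-k+1)/k!`. -/
noncomputable def genBinom (a : ℝ) (k : ℕ) : ℝ :=
  (∏ j ∈ Finset.range k, (a - (j : ℝ))) / (Nat.factorial k : ℝ)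

open Finset Topology

noncomputable def glWeight (α : ℝ) (k : ℕ) : ℝ := (-1) ^ k * genBinom α k

lemma genBinom_zero (a : ℝ) : genBinom a 0 = 1 := by simp [genBinom]

lemma genBinom_one (a : ℝ) : genBinom a 1 = a := by simp [genBinom]

lemma genBinom_succ (a : ℝ) (k : ℕ) :
    genBinom a (k + 1) = genBinom a k * (a - k) / (k + 1) := by
  simp only [genBinom, prod_range_succ, Nat.factorial_succ, Nat.cast_mul, Nat.cast_succ]
  field_simp

lemma glWeight_zero (α : ℝ) : glWeight α 0 = 1 := by simp [glWeight, genBinom_zero]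

lemma glWeight_one (α : ℝ) : glWeight α 1 = -α := by simp [glWeight, genBinom_one]

lemma glWeight_succ (α : ℝ) (k : ℕ) :
    glWeight α (k + 1) = glWeight α k * ((k - α) / (k + 1)) := by
  rw [glWeight, glWeight, genBinom_succ, pow_succ]
  ring

lemma glWeight_nonneg {α : ℝ} (hα1 : 1 ≤ α) (hα2 : α ≤ 2) {k : ℕ} (hk : 2 ≤ k) :
    0 ≤ glWeight α k := by
  induction k, hk using Nat.le_induction with
  | base =>
    rw [glWeight_succ, glWeight_one]
    norm_num
    nlinarith
  | succ k hk ih =>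
    have hαk : α ≤ k := le_trans hα2 (by exact_mod_cast hk)
    rw [glWeight_succ]
    exact mul_nonneg ih (div_nonneg (by linarith) (by positivity))

lemma hasSum_glWeight_mul {α E : ℝ} {q g : ℕ → ℝ} (hq : HasSum (fun k ↦ q k * g k) E)
    (hq0 : q 0 = 0) (hq1 : q 1 = 0) (hw : ∀ k, 2 ≤ k → glWeight α k = (α - 1) * q k) :
    HasSum (fun k ↦ glWeight α k * g k) (g 0 - α * g 1 + (α - 1) * E) := by
  set d := fun k ↦ glWeight α k * g k - (α - 1) * (q k * g k)
  have hhead : HasSum d (∑ k ∈ range 2, d k) := hasSum_sum_of_ne_finset_zero fun k hk ↦ by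
    simp only [mem_range, not_lt] at hk
    simp only [d, hw k hk]
    ring
  replace hhead : HasSum d (g 0 - α * g 1) := by
    convert hhead using 1
    simp [d, sum_range_succ, glWeight_zero, glWeight_one, hq0, hq1]
    ring
  convert hhead.add (hq.mul_left (α - 1)) using 1
  funext k
  ring

lemma hasSum_integral_countable {X E : Type*} [MeasurableSpace X] [Countable X]
    [MeasurableSingletonClass X] [NormedAddCommGroup E] [NormedSpace ℝ E] [CompleteSpace E]
    {μ : Measure X} {f : X → E} (hf : Integrable f μ) :
    HasSum (fun x ↦ μ.real {x} • f x) (∫ x, f x ∂μ) := by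
  rw [← Measure.sum_smul_dirac μ] at hf ⊢
  convert hasSum_integral_measure hf using 2 with x
  rw [integral_smul_measure, integral_dirac, Measure.sum_smul_dirac, measureReal_def]

lemma identDistrib_of_measure_setOf_eq {Ω Ω' β : Type*} [MeasurableSpace Ω]
    [MeasurableSpace Ω'] [MeasurableSpace β] [Countable β] [MeasurableSingletonClass β]
    {μ : Measure Ω} {ν : Measure Ω'} {X : Ω → β} {Y : Ω' → β} (hX : Measurable X)
    (hY : Measurable Y) (h : ∀ b, μ {ω | X ω = b} = ν {ω | Y ω = b}) : IdentDistrib X Y μ ν where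
  aemeasurable_fst := hX.aemeasurable
  aemeasurable_snd := hY.aemeasurable
  map_eq := Measure.ext_of_singleton fun b ↦ by
    rw [Measure.map_apply hX (measurableSet_singleton b),
      Measure.map_apply hY (measurableSet_singleton b)]
    exact h b

lemma ae_tendsto_average_comp {Ω β : Type*} [MeasurableSpace Ω] [MeasurableSpace β]
    {P : Measure Ω} {Y : ℕ → Ω → β} (hindep : iIndepFun Y P)
    (hident : ∀ n, IdentDistrib (Y n) (Y 0) P P) {g : β → ℝ} (hg : Measurable g)
    (hint : Integrable g (P.map (Y 0))) :
    ∀ᵐ ω ∂P, Tendsto (fun N : ℕ ↦ (∑ n ∈ range N, g (Y n ω)) / N) atTop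
      (𝓝 (∫ b, g b ∂P.map (Y 0))) := by
  rw [integral_map (hident 0).aemeasurable_fst hg.aestronglyMeasurable]
  exact strong_law_ae_real (fun n ↦ g ∘ Y n)
    ((integrable_map_measure hg.aestronglyMeasurable (hident 0).aemeasurable_fst).1 hint)
    (fun i j hij ↦ (hindep.indepFun hij).comp hg hg) (fun n ↦ (hident n).comp hg)

theorem monte_carlo_gl_derivative_one_lt_alpha_lt_two_general
    (α : ℝ) (hα1 : 1 < α) (hα2 : α < 2) (h : ℝ) (t : ℝ)
    (f : ℝ → ℝ) (hf_bdd : ∃ M : ℝ, ∀ x, |f x| ≤ M)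
    {Ω : Type*} [MeasurableSpace Ω] (P : Measure Ω) [IsProbabilityMeasure P]
    (Y : ℕ → Ω → ℕ) (hY_meas : ∀ n, Measurable (Y n))
    (hY_indep : iIndepFun Y P)
    (hY_ge : ∀ n ω, 2 ≤ Y n ω)
    (hY_distrib : ∀ n k, 2 ≤ k →
      P {ω | Y n ω = k} =
        ENNReal.ofReal ((1 / (α - 1)) * ((-1 : ℝ) ^ k * genBinom α k))) :
    ∀ᵐ ω ∂P, Tendsto
      (fun N : ℕ => (1 / h ^ α) *
        (f t - α * f (t - h) +
          (α - 1) * ((1 / (N : ℝ)) * ∑ n ∈ Finset.range N, f (t - (Y n ω : ℝ) * h))))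
      atTop
      (nhds ((1 / h ^ α) *
        ∑' k : ℕ, (-1 : ℝ) ^ k * genBinom α k * f (t - (k : ℝ) * h))) := by
  have hY_small : ∀ n k, k < 2 → {ω | Y n ω = k} = ∅ := fun n k hk ↦
    Set.eq_empty_of_forall_notMem fun ω (hω : Y n ω = k) ↦ by have := hY_ge n ω; omega
  have hident : ∀ n, IdentDistrib (Y n) (Y 0) P P := fun n ↦
    identDistrib_of_measure_setOf_eq (hY_meas n) (hY_meas 0) fun k ↦ by
      rcases lt_or_ge k 2 with hk | hk
      · rw [hY_small n k hk, hY_small 0 k hk]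
      · exact (hY_distrib n k hk).trans (hY_distrib 0 k hk).symm
  have hmass : ∀ k, (P.map (Y 0)).real {k} = (P {ω | Y 0 ω = k}).toReal := fun k ↦
    map_measureReal_apply (hY_meas 0) (measurableSet_singleton k)
  have hweight : ∀ k, 2 ≤ k → glWeight α k = (α - 1) * (P.map (Y 0)).real {k} := fun k hk ↦ by
    have hα : 0 < α - 1 := sub_pos.2 hα1
    rw [hmass, hY_distrib 0 k hk, ← glWeight, ENNReal.toReal_ofReal
      (mul_nonneg (one_div_pos.2 hα).le (glWeight_nonneg hα1.le hα2.le hk))]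
    field_simp
  set g : ℕ → ℝ := fun k ↦ f (t - k * h)
  obtain ⟨M, hM⟩ := hf_bdd
  have hg_int : Integrable g (P.map (Y 0)) :=
    .of_bound measurable_from_top.aestronglyMeasurable M (.of_forall fun k ↦ hM _)
  have hseries := hasSum_glWeight_mul (hasSum_integral_countable hg_int)
    (by simp [hmass, hY_small 0 0]) (by simp [hmass, hY_small 0 1]) hweight
  filter_upwards [ae_tendsto_average_comp hY_indep hident measurable_from_top hg_int] with ω hω
  rw [show ∑' k : ℕ, (-1 : ℝ) ^ k * genBinom α k * f (t - k * h) = _ from hseries.tsum_eq]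
  convert ((hω.const_mul (α - 1)).const_add (g 0 - α * g 1)).const_mul (1 / h ^ α) using 3
  simp [g, div_eq_inv_mul]

/-- Monte Carlo evaluation of the Grünwald–Letnikov fractional derivative of order
`1 < α < 2`: if `Y₁⁺, Y₂⁺, …` are i.i.d. with the sieved Sibuya-like distribution
`P(Y⁺ = k) = (1/(α-1)) (-1)^k binom(α,k)` on `{2,3,…}`, then almost surely
`(1/h^α)[f(t) - α f(t-h) + (α-1)(1/N) Σ_{n<N} f(t - Yₙ⁺ h)] → A_h^α f(t)`. -/
theorem monte_carlo_gl_derivative_one_lt_alpha_lt_two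
    (α : ℝ) (hα1 : 1 < α) (hα2 : α < 2) (h : ℝ) (hh : 0 < h) (t : ℝ)
    (f : ℝ → ℝ) (hf_meas : Measurable f) (hf_bdd : ∃ M : ℝ, ∀ x, |f x| ≤ M)
    {Ω : Type*} [MeasurableSpace Ω] (P : Measure Ω) [IsProbabilityMeasure P]
    (Y : ℕ → Ω → ℕ) (hY_meas : ∀ n, Measurable (Y n))
    (hY_indep : iIndepFun Y P)
    (hY_ge : ∀ n ω, 2 ≤ Y n ω)
    (hY_distrib : ∀ n k, 2 ≤ k →
      P {ω | Y n ω = k} =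
        ENNReal.ofReal ((1 / (α - 1)) * ((-1 : ℝ) ^ k * genBinom α k))) :
    ∀ᵐ ω ∂P, Tendsto
      (fun N : ℕ => (1 / h ^ α) *
        (f t - α * f (t - h) +
          (α - 1) * ((1 / (N : ℝ)) * ∑ n ∈ Finset.range N, f (t - (Y n ω : ℝ) * h))))
      atTop
      (nhds ((1 / h ^ α) *
        ∑' k : ℕ, (-1 : ℝ) ^ k * genBinom α k * f (t - (k : ℝ) * h))) :=
  monte_carlo_gl_derivative_one_lt_alpha_lt_two_general α hα1 hα2 h t f hf_bdd P Y hY_meas hY_indep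
    hY_ge hY_distrib
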